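/- arXiv:2604.22395 — 4 statements merged into one kernel-verified Lean document; each statement's English description precedes it below -/
import Mathlib

section
/- Let 2 ≤ r < s be integers and let G be a finite simple graph of order v with exactly v/2 vertices of degree r and v/2 vertices of degree s. For a fat (degree-s) vertex x, let deg_f(x) denote the number of neighbors of x that also have degree s. Then G contains an edge xy with both x and y of degree s such that deg_f(x) + deg_f(y) ≥ 2(s−r). -/
open SimpleGraph Set

/-- The degree of a vertex, via the natural cardinality of its neighbor set. -/
noncomputable def deg {V : Type*} (G : SimpleGraph V) (v : V) : ℕ :=
  (G.neighborSet v).ncard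

/-- Number of edges both of whose endpoints have degree `d`. -/
noncomputable def edgeCountDeg {V : Type*} (G : SimpleGraph V) (d : ℕ) : ℕ :=
  {e ∈ G.edgeSet | ∀ v ∈ e, deg G v = d}.ncard

/-- An `(r,s;g)`-balanced biregular graph: girth `g`, degree set exactly `{r, s}`,
and equally many vertices of degree `r` as of degree `s`. -/
def IsBabi {V : Type*} (r s g : ℕ) (G : SimpleGraph V) : Prop :=
  G.girth = g ∧ (∀ v, deg G v = r ∨ deg G v = s) ∧
  (∃ v, deg G v = r) ∧ (∃ v, deg G v = s) ∧
  {v | deg G v = r}.ncard = {v | deg G v = s}.ncard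

/-- The number of fat edges through a fat vertex. -/
noncomputable def degF {V : Type*} (G : SimpleGraph V) (s : ℕ) (x : V) : ℕ :=
  {y ∈ G.neighborSet x | deg G y = s}.ncard

/-- there is a fat edge `xy` with `deg_f(x) + deg_f(y) ≥ 2(s−r)`. -/
theorem stmt_2 (v : ℕ) (hv : Even v) (hv0 : 0 < v) (G : SimpleGraph (Fin v)) (r s : ℕ)
    (hr : 2 ≤ r) (hrs : r < s)
    (hthin : {x | deg G x = r}.ncard = v / 2)
    (hfat : {x | deg G x = s}.ncard = v / 2) :
    ∃ x y : Fin v, G.Adj x y ∧ deg G x = s ∧ deg G y = s ∧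
      2 * (s - r) ≤ degF G s x + degF G s y := by
  classical
  by_contra hcon
  push_neg at hcon
  have hdegeq : ∀ x : Fin v, deg G x = G.degree x := by
    intro x
    rw [deg, SimpleGraph.degree, SimpleGraph.neighborFinset_def, Set.ncard_eq_toFinset_card']
  have hdich : ∀ x : Fin v, deg G x = r ∨ deg G x = s := by
    have hdisj : Disjoint {x : Fin v | deg G x = r} {x | deg G x = s} := by
      rw [Set.disjoint_left]
      rintro a ha hb
      exact hrs.ne (ha.symm.trans hb)
    have hcardU : ({x : Fin v | deg G x = r} ∪ {x | deg G x = s}).ncard = v := by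
      rw [Set.ncard_union_eq hdisj (Set.toFinite _) (Set.toFinite _), hthin, hfat]
      obtain ⟨k, hk⟩ := hv
      omega
    have huniv : {x : Fin v | deg G x = r} ∪ {x | deg G x = s} = Set.univ := by
      apply Set.eq_of_subset_of_ncard_le (Set.subset_univ _)
      rw [hcardU, Set.ncard_univ, Nat.card_eq_fintype_card, Fintype.card_fin]
    intro x
    have : x ∈ ({x : Fin v | deg G x = r} ∪ {x | deg G x = s}) := huniv ▸ Set.mem_univ x
    exact this
  set F : Finset (Fin v) := Finset.univ.filter (fun x => deg G x = s) with hF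
  set T : Finset (Fin v) := Finset.univ.filter (fun x => deg G x = r) with hT
  have hFcard : F.card = v / 2 := by
    have h : {x : Fin v | deg G x = s} = ↑F := by ext x; simp [hF]
    rw [← Set.ncard_coe_finset, ← h, hfat]
  have hTcard : T.card = v / 2 := by
    have h : {x : Fin v | deg G x = r} = ↑T := by ext x; simp [hT]
    rw [← Set.ncard_coe_finset, ← h, hthin]
  set n := v / 2 with hn
  have hn1 : 1 ≤ n := by
    obtain ⟨k, hk⟩ := hv
    omega
  set f : Fin v → ℕ := fun x => (F.filter (fun y => G.Adj x y)).card with hf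
  set t : Fin v → ℕ := fun x => (T.filter (fun y => G.Adj x y)).card with ht
  have hdegF : ∀ x, degF G s x = f x := by
    intro x
    have hst : {y | y ∈ G.neighborSet x ∧ deg G y = s}
        = ↑(F.filter (fun y => G.Adj x y)) := by
      ext y
      simp [hF, SimpleGraph.mem_neighborSet, and_comm]
    rw [degF, hst, Set.ncard_coe_finset]
  have hft : ∀ x ∈ F, f x + t x = s := by
    intro x hx
    have hxs : deg G x = s := by simpa [hF] using hx
    have e1 : F.filter (fun y => G.Adj x y)
        = (G.neighborFinset x).filter (fun y => deg G y = s) := by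
      ext y; simp [hF, SimpleGraph.mem_neighborFinset, and_comm]
    have e2 : T.filter (fun y => G.Adj x y)
        = (G.neighborFinset x).filter (fun y => ¬ deg G y = s) := by
      ext y
      simp only [hT, Finset.mem_filter, Finset.mem_univ, true_and,
        SimpleGraph.mem_neighborFinset]
      constructor
      · rintro ⟨h1, h2⟩
        exact ⟨h2, by omega⟩
      · rintro ⟨h1, h2⟩
        rcases hdich y with h | h
        · exact ⟨h, h1⟩
        · exact absurd h h2
    rw [hf, ht]
    simp only [e1, e2]
    rw [Finset.card_filter_add_card_filter_not]
    rw [← SimpleGraph.degree, ← hdegeq, hxs]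
  set S := ∑ x ∈ F, f x with hS
  set E := ∑ x ∈ F, t x with hE
  have hSE : S + E = s * n := by
    rw [hS, hE, ← Finset.sum_add_distrib]
    rw [Finset.sum_congr rfl hft, Finset.sum_const, hFcard, smul_eq_mul, mul_comm]
  have hEswap : E = ∑ y ∈ T, f y := by
    rw [hE]
    simp only [ht, hf, Finset.card_filter]
    rw [Finset.sum_comm]
    refine Finset.sum_congr rfl fun y hy => ?_
    refine Finset.sum_congr rfl fun x hx => ?_
    rw [G.adj_comm]
  have hEle : E ≤ r * n := by
    rw [hEswap]
    calc ∑ y ∈ T, f y ≤ ∑ _y ∈ T, r := by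
          refine Finset.sum_le_sum fun y hy => ?_
          have hyr : deg G y = r := by simpa [hT] using hy
          have hsub : F.filter (fun z => G.Adj y z) ⊆ G.neighborFinset y := by
            intro z hz
            simp only [Finset.mem_filter] at hz
            simpa [SimpleGraph.mem_neighborFinset] using hz.2
          calc f y ≤ (G.neighborFinset y).card := Finset.card_le_card hsub
            _ = r := by rw [← SimpleGraph.degree, ← hdegeq, hyr]
      _ = r * n := by rw [Finset.sum_const, hTcard, smul_eq_mul, mul_comm]
  have hSlow : (s - r) * n ≤ S := by
    have h1 : (s - r) * n + r * n = s * n := by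
      rw [← Nat.add_mul, Nat.sub_add_cancel hrs.le]
    have h2 : (s - r) * n + E ≤ (s - r) * n + r * n := by omega
    rw [h1, ← hSE] at h2
    omega
  set Q := ∑ x ∈ F, f x * f x with hQ
  -- the double sum over fat edges
  have hR : ∑ x ∈ F, ∑ y ∈ F.filter (fun y => G.Adj x y), f y = Q := by
    rw [hQ]
    simp only [Finset.sum_filter]
    rw [Finset.sum_comm]
    refine Finset.sum_congr rfl fun y hy => ?_
    rw [← Finset.sum_filter, Finset.sum_const, smul_eq_mul]
    congr 1
    show (F.filter (fun x => G.Adj x y)).card = (F.filter (fun z => G.Adj y z)).card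
    congr 1
    ext x
    simp [G.adj_comm]
  have hH : ∑ x ∈ F, ∑ y ∈ F.filter (fun y => G.Adj x y), (f x + f y) = Q + Q := by
    have : ∀ x ∈ F, ∑ y ∈ F.filter (fun y => G.Adj x y), (f x + f y)
        = f x * f x + ∑ y ∈ F.filter (fun y => G.Adj x y), f y := by
      intro x hx
      rw [Finset.sum_add_distrib, Finset.sum_const, smul_eq_mul]
    rw [Finset.sum_congr rfl this, Finset.sum_add_distrib, hR, hQ]
  -- upper bound via the negated goal
  have hHle : Q + Q ≤ S * (2 * (s - r) - 1) := by
    rw [← hH, hS, Finset.sum_mul]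
    refine Finset.sum_le_sum fun x hx => ?_
    have hxs : deg G x = s := by simpa [hF] using hx
    calc ∑ y ∈ F.filter (fun y => G.Adj x y), (f x + f y)
        ≤ ∑ _y ∈ F.filter (fun y => G.Adj x y), (2 * (s - r) - 1) := by
          refine Finset.sum_le_sum fun y hy => ?_
          simp only [Finset.mem_filter] at hy
          have hys : deg G y = s := by
            have := hy.1
            simpa [hF] using this
          have hlt := hcon x y hy.2 hxs hys
          rw [hdegF, hdegF] at hlt
          omega
      _ = f x * (2 * (s - r) - 1) := by
          rw [Finset.sum_const, smul_eq_mul, hf]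
  -- Cauchy–Schwarz
  have hCS : S * S ≤ n * Q := by
    have := sq_sum_le_card_mul_sum_sq (s := F) (f := f) (α := ℕ)
    simpa [hS, hQ, hFcard, sq, ← hn] using this
  have hQlow : (s - r) * S ≤ Q := by
    have h1 : n * ((s - r) * S) ≤ n * Q := by
      calc n * ((s - r) * S) = ((s - r) * n) * S := by ring
        _ ≤ S * S := Nat.mul_le_mul_right _ hSlow
        _ ≤ n * Q := hCS
    exact Nat.le_of_mul_le_mul_left h1 (by omega)
  have hSpos : 1 ≤ S := by
    have h1 : 1 * 1 ≤ (s - r) * n := Nat.mul_le_mul (by omega) hn1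
    exact le_trans (by simpa using h1) hSlow
  -- final contradiction
  obtain ⟨e, he⟩ : ∃ e, s - r = e + 1 := ⟨s - r - 1, by omega⟩
  rw [he] at hQlow hHle
  have h2 : S * (2 * (e + 1) - 1) = S * (2 * e + 1) := by
    rw [show 2 * (e + 1) - 1 = 2 * e + 1 by omega]
  rw [h2] at hHle
  nlinarith [hQlow, hHle, hSpos]
end

section
/- If there exists a k-regular simple graph of girth g with v vertices, where k > 2, then for every positive integer n there exists a k-regular simple graph of girth g with nv vertices. -/
open SimpleGraph Set

/-!
The disjoint union of `n` copies of a `(k, g)`-graph `G`, realised as the box product `⊥ □ G` of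
the edgeless graph on `Fin n` with `G`, is `k`-regular on `n * v` vertices. Its girth is that of
`G`: a copy of `G` sits inside it, and conversely every cycle stays in one copy, on which the
projection to `G` is injective and hence maps the cycle to a cycle of the same length.
-/

variable {α V W : Type*} {G : SimpleGraph V} {H : SimpleGraph W}

lemma deg_iso (f : G ≃g H) (x : V) : deg H (f x) = deg G x := by
  simp only [deg, ← Nat.card_coe_set_eq]
  exact Nat.card_congr (f.mapNeighborSet x).symm

lemma SimpleGraph.Walk.isCycle_iff_nodup_support_tail {u : V} {p : G.Walk u u} :
    p.IsCycle ↔ p.support.tail.Nodup ∧ 3 ≤ p.length := by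
  refine ⟨fun h => ⟨h.support_nodup, h.three_le_length⟩, fun ⟨hnodup, hlen⟩ => ?_⟩
  have hnil : ¬ p.Nil := by rw [← Walk.length_eq_zero_iff]; omega
  rw [isCycle_iff_isPath_tail_and_le_length, isPath_def, support_tail_of_not_nil p hnil]
  exact ⟨hnodup, hlen⟩

lemma SimpleGraph.Walk.IsCycle.map_of_injOn {f : G →g H} {u : V} {p : G.Walk u u}
    (hp : p.IsCycle) (hf : Set.InjOn f {w | w ∈ p.support}) : (p.map f).IsCycle := by
  rw [isCycle_iff_nodup_support_tail] at hp ⊢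
  rw [support_map, ← List.map_tail, length_map]
  exact ⟨hp.1.map_on fun x hx y hy => hf (List.mem_of_mem_tail hx) (List.mem_of_mem_tail hy), hp.2⟩

lemma deg_bot_boxProd (x : α × V) : deg ((⊥ : SimpleGraph α) □ G) x = deg G x.2 := by
  rw [deg, neighborSet_boxProd, neighborSet_bot, Set.empty_prod, Set.empty_union,
    Set.ncard_prod, Set.ncard_singleton, one_mul, deg]

variable (α G) in
def SimpleGraph.boxProdBotSnd : ((⊥ : SimpleGraph α) □ G) →g G where
  toFun := Prod.snd
  map_rel' h := (boxProd_adj.mp h).resolve_left (fun h' => h'.1.elim) |>.1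

lemma SimpleGraph.egirth_bot_boxProd [Nonempty α] :
    ((⊥ : SimpleGraph α) □ G).egirth = G.egirth := by
  refine le_antisymm (boxProdRight ⊥ G (Classical.arbitrary α)).isContained.egirth_le ?_
  rw [le_egirth]
  classical
  intro x p hp
  have hfst : ∀ y ∈ p.support, y.1 = x.1 := fun y hy =>
    (reachable_bot.mp (reachable_boxProd.mp (p.takeUntil y hy).reachable).1).symm
  have hinj : Set.InjOn (boxProdBotSnd α G) {y | y ∈ p.support} := fun y hy z hz h =>
    Prod.ext ((hfst y hy).trans (hfst z hz).symm) h
  rw [← p.length_map (boxProdBotSnd α G)]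
  exact egirth_le_length (hp.map_of_injOn hinj)

theorem stmt_3_general (k g v : ℕ)
    (h : ∃ G : SimpleGraph (Fin v), (∀ x, deg G x = k) ∧ G.girth = g) :
    ∀ n : ℕ, 0 < n →
      ∃ G : SimpleGraph (Fin (n * v)), (∀ x, deg G x = k) ∧ G.girth = g := by
  intro n hn
  obtain ⟨G, hdeg, hgirth⟩ := h
  have : Nonempty (Fin n) := ⟨⟨0, hn⟩⟩
  have hcard : Fintype.card (Fin n × Fin v) = n * v := by simp
  let f := ((⊥ : SimpleGraph (Fin n)) □ G).overFinIso hcard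
  refine ⟨((⊥ : SimpleGraph (Fin n)) □ G).overFin hcard, fun x => ?_, ?_⟩
  · rw [← f.apply_symm_apply x, deg_iso, deg_bot_boxProd, hdeg]
  · rw [← f.girth_eq, girth, egirth_bot_boxProd, ← girth, hgirth]

/-- multiplying the order of a `(k,g)`-graph. -/
theorem stmt_3 (k g v : ℕ) (hk : 2 < k)
    (h : ∃ G : SimpleGraph (Fin v), (∀ x, deg G x = k) ∧ G.girth = g) :
    ∀ n : ℕ, 0 < n →
      ∃ G : SimpleGraph (Fin (n * v)), (∀ x, deg G x = k) ∧ G.girth = g :=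
  stmt_3_general k g v h
end

section
/- Let 2 ≤ r < s be integers and let G be an (r,s;g)-balanced biregular graph with g > 4 even. Then the order of G is at least 2·( s + (rs + (s−r)² − 2s + 1)·(1 + (r−1) + ⋯ + (r−1)^{(g−6)/2}) ). -/
open SimpleGraph Set

/-!
Fix an edge `uv` and let `k = (g - 6) / 2 + 1`, so that the girth is at least `2k + 4`. The
vertices at distance `t` from `u` and `t + 1` from `v`, for `t < k + 2`, together with their
mirror images, are pairwise disjoint. Below the girth a vertex of level `t ≥ 1` has at most one
neighbour closer to `u`, all its other neighbours lie in level `t + 1`, and each of those has no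
other neighbour in level `t`. Hence the `u`-side contains at least
`deg u + L_u (1 + (r - 1) + ⋯ + (r - 1)^(k-1))` vertices, where
`L_u = ∑_{w ~ u, w ≠ v} (deg w - 1)`.

If `u` and `v` both have degree `s` and have `a_u`, `a_v` neighbours of degree `s`, then
`L_u + L_v = 2(rs - 2s + 1) + (a_u + a_v)(s - r)`, which is at least `2(rs + (s - r)² - 2s + 1)`
as soon as `a_u + a_v ≥ 2(s - r)`. Such an edge exists: the `N` vertices of degree `s` send at
most `rN` edges to the `N` vertices of degree `r`, so they induce a subgraph of average degree at
least `s - r`, and by Cauchy–Schwarz some edge of it has `a_u + a_v` at least twice the average.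
-/

open Finset

namespace SimpleGraph

variable {V : Type*} {G : SimpleGraph V}

lemma egirth_eq_of_girth_eq {g : ℕ} (h : G.girth = g) (hg : g ≠ 0) : G.egirth = g := by
  have : G.egirth ≠ ⊤ := fun ht => hg (by simp [← h, girth, ht])
  rw [← h, girth, ENat.natCast_toNat this]

-- The union of two distinct `x`-`y` paths contains a cycle no longer than both together.
lemma Walk.IsPath.eq_of_length_add_lt_egirth {x y : V} {p q : G.Walk x y}
    (hp : p.IsPath) (hq : q.IsPath) (hlen : ((p.length + q.length : ℕ) : ℕ∞) < G.egirth) :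
    p = q := by
  classical
  let H : SimpleGraph V := fromEdgeSet {e | e ∈ p.edges ∨ e ∈ q.edges}
  have hH : ∀ e, e ∈ H.edgeSet ↔ (e ∈ p.edges ∨ e ∈ q.edges) ∧ ¬e.IsDiag := fun e => by
    simp [H, edgeSet_fromEdgeSet]
  have hHG : ∀ e ∈ H.edgeSet, e ∈ G.edgeSet := fun e he => by
    rcases ((hH e).1 he).1 with he | he
    exacts [p.edges_subset_edgeSet he, q.edges_subset_edgeSet he]
  have hpH : ∀ e ∈ p.edges, e ∈ H.edgeSet := fun e he =>
    (hH e).2 ⟨Or.inl he, G.not_isDiag_of_mem_edgeSet (p.edges_subset_edgeSet he)⟩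
  have hqH : ∀ e ∈ q.edges, e ∈ H.edgeSet := fun e he =>
    (hH e).2 ⟨Or.inr he, G.not_isDiag_of_mem_edgeSet (q.edges_subset_edgeSet he)⟩
  by_cases hacyc : H.IsAcyclic
  · have := congrArg (fun r : H.Path x y => (r : H.Walk x y).transfer G
      fun e he => hHG e (Walk.edges_subset_edgeSet _ he))
      ((hacyc.subsingleton_path x y).elim ⟨p.transfer H hpH, hp.transfer hpH⟩
        ⟨q.transfer H hqH, hq.transfer hqH⟩)
    simpa [Walk.transfer_transfer, Walk.transfer_self] using this
  · obtain ⟨w, c, hc⟩ : ∃ w, ∃ c : H.Walk w w, c.IsCycle := by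
      simpa [IsAcyclic] using hacyc
    have hsub : c.edges ⊆ p.edges ++ q.edges := fun e he =>
      List.mem_append.2 ((hH e).1 (c.edges_subset_edgeSet he)).1
    have hclen : c.length ≤ p.length + q.length := by
      simpa using (hc.edges_nodup.subperm hsub).length_le
    have := egirth_le_length (hc.transfer fun e he => hHG e (c.edges_subset_edgeSet he))
    rw [Walk.length_transfer] at this
    exact (lt_irrefl _ (this.trans_lt
      ((by exact_mod_cast hclen : (c.length : ℕ∞) ≤ _).trans_lt hlen))).elim

lemma Walk.isPath_concat_of_length_eq_dist {u a b : V} {p : G.Walk u a}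
    (hp : p.length = G.dist u a) (h : G.Adj a b) (hb : G.dist u a ≤ G.dist u b) :
    (p.concat h).IsPath := by
  classical
  refine (p.isPath_of_length_eq_dist hp).concat (fun hmem => ?_) h
  have hsplit := congrArg Walk.length (p.take_spec hmem)
  rw [Walk.length_append] at hsplit
  have hdrop : (p.dropUntil b hmem).length ≠ 0 := fun h0 =>
    h.ne (Walk.eq_of_length_eq_zero h0).symm
  have := G.dist_le (p.takeUntil b hmem)
  omega

lemma exists_adj_dist_eq_of_dist_eq_succ {u x : V} {m : ℕ} (h : G.dist u x = m + 1) :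
    ∃ y, G.Adj y x ∧ G.dist u y = m := by
  have hux : G.Reachable u x := Reachable.of_dist_ne_zero (by omega)
  obtain ⟨p, hp⟩ := hux.exists_walk_length_eq_dist
  obtain ⟨y, hxy, q, hq⟩ := Walk.exists_eq_cons_of_ne
    (fun hxu : x = u => by simp [hxu] at h) p.reverse
  have hlen : q.length = m := by
    have := congrArg Walk.length hq
    simp only [Walk.length_reverse, Walk.length_cons] at this
    omega
  refine ⟨y, hxy.symm, le_antisymm ?_ ?_⟩
  · simpa [dist_comm, hlen] using G.dist_le q
  · have := hxy.symm.reachable.dist_triangle_right u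
    simp only [dist_eq_one_iff_adj.2 hxy.symm] at this
    omega

/-- An edge joining two vertices at the same distance from `u` closes an odd cycle. -/
lemma dist_ne_of_adj_of_lt_egirth {u a b : V} (hab : G.Adj a b) (hua : G.Reachable u a)
    (hg : ((2 * G.dist u a + 1 : ℕ) : ℕ∞) < G.egirth) : G.dist u a ≠ G.dist u b := by
  intro hd
  obtain ⟨p, hp⟩ := hua.exists_walk_length_eq_dist
  obtain ⟨q, hq⟩ := (hua.trans hab.reachable).exists_walk_length_eq_dist
  have := (p.isPath_concat_of_length_eq_dist hp hab hd.le).eq_of_length_add_lt_egirth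
    (q.isPath_of_length_eq_dist hq)
    (by rw [Walk.length_concat, hp, hq, ← hd]; convert hg using 2; ring)
  have := congrArg Walk.length this
  rw [Walk.length_concat] at this
  omega

lemma eq_of_adj_of_dist_eq_of_lt_egirth {u x y₁ y₂ : V} {m : ℕ} (hx : G.dist u x = m + 1)
    (h₁ : G.Adj y₁ x) (h₂ : G.Adj y₂ x) (hy₁ : G.dist u y₁ = m) (hy₂ : G.dist u y₂ = m)
    (hg : ((2 * m + 2 : ℕ) : ℕ∞) < G.egirth) : y₁ = y₂ := by
  have hux : G.Reachable u x := Reachable.of_dist_ne_zero (by omega)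
  obtain ⟨p₁, hp₁⟩ := (hux.trans h₁.symm.reachable).exists_walk_length_eq_dist
  obtain ⟨p₂, hp₂⟩ := (hux.trans h₂.symm.reachable).exists_walk_length_eq_dist
  have heq := (p₁.isPath_concat_of_length_eq_dist hp₁ h₁ (by omega)).eq_of_length_add_lt_egirth
    (p₂.isPath_concat_of_length_eq_dist hp₂ h₂ (by omega))
    (by rwa [Walk.length_concat, Walk.length_concat, hp₁, hp₂, hy₁, hy₂, ← two_mul, mul_add])
  exact (Walk.concat_inj heq).1

section Layer

variable [Fintype V]

-- For an edge `uv`, the level at depth `t` of the Moore tree on the `u` side of the edge.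
open Classical in
noncomputable def layer (G : SimpleGraph V) (u v : V) (t : ℕ) : Finset V :=
  {w | G.dist u w = t ∧ G.dist v w = t + 1}

@[simp]
lemma mem_layer {u v w : V} {t : ℕ} :
    w ∈ G.layer u v t ↔ G.dist u w = t ∧ G.dist v w = t + 1 := by
  simp [layer]

variable {u v : V}

lemma layer_zero (huv : G.Adj u v) : G.layer u v 0 = {u} := by
  ext w
  simp only [mem_layer, Finset.mem_singleton, zero_add, dist_eq_one_iff_adj]
  constructor
  · rintro ⟨h0, hvw⟩
    exact ((dist_eq_zero_iff_eq_or_not_reachable.1 h0).resolve_right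
      fun h => h (huv.reachable.trans hvw.reachable)).symm
  · rintro rfl
    exact ⟨dist_self, huv.symm⟩

lemma sum_card_layer_add_card_layer_le_card (u v : V) (k : ℕ) :
    ∑ t ∈ range k, (#(G.layer u v t) + #(G.layer v u t)) ≤ Fintype.card V := by
  classical
  have hdisj : ∀ t, Disjoint (G.layer u v t) (G.layer v u t) := fun t =>
    Finset.disjoint_left.2 fun w hw hw' => by simp only [mem_layer] at hw hw'; omega
  have hpair : (Finset.range k : Set ℕ).PairwiseDisjoint fun t => G.layer u v t ∪ G.layer v u t :=
    fun t _ t' _ htt' => Finset.disjoint_left.2 fun w hw hw' => by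
      simp only [Finset.mem_union, mem_layer] at hw hw'
      omega
  calc _ = ∑ t ∈ range k, #(G.layer u v t ∪ G.layer v u t) :=
        sum_congr rfl fun t _ => (card_union_of_disjoint (hdisj t)).symm
    _ = #((range k).biUnion fun t => G.layer u v t ∪ G.layer v u t) := (card_biUnion hpair).symm
    _ ≤ Fintype.card V := card_le_univ _

lemma dist_add_one_eq_or_mem_layer_succ {w x : V} {t : ℕ} (huv : G.Adj u v)
    (hw : w ∈ G.layer u v t) (ht : 1 ≤ t) (hg : ((2 * t + 4 : ℕ) : ℕ∞) ≤ G.egirth)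
    (hwx : G.Adj w x) : G.dist u x + 1 = t ∨ x ∈ G.layer u v (t + 1) := by
  rw [mem_layer] at hw ⊢
  obtain ⟨huw, hvw⟩ := hw
  have hg' : ∀ n, n < 2 * t + 4 → (n : ℕ∞) < G.egirth := fun n hn =>
    (Nat.cast_lt.2 hn).trans_le hg
  have hrvw : G.Reachable v w := Reachable.of_dist_ne_zero (by omega)
  have hruw : G.Reachable u w := huv.reachable.trans hrvw
  have hux : G.dist u w ≠ G.dist u x :=
    dist_ne_of_adj_of_lt_egirth hwx hruw (by rw [huw]; exact hg' _ (by omega))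
  rcases hwx.diff_dist_adj (u := u) with hsame | hfar | hnear
  · exact (hux hsame.symm).elim
  · refine Or.inr ⟨hfar.trans (by rw [huw]), ?_⟩
    have hvx : G.dist v x ≠ t + 1 := by
      intro hvx
      have hxu : G.dist x u = t + 1 := by rw [dist_comm]; omega
      have hxv : G.dist x v = t + 1 := by rw [dist_comm]; exact hvx
      exact dist_ne_of_adj_of_lt_egirth huv (hruw.trans hwx.reachable).symm
        (by rw [hxu]; exact hg' _ (by omega)) (hxu.trans hxv.symm)
    have hvx' : G.dist v x ≠ t := by
      intro hvx
      obtain ⟨y, hyw, huy⟩ :=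
        exists_adj_dist_eq_of_dist_eq_succ (m := t - 1) (by omega : G.dist u w = t - 1 + 1)
      have hvy : G.dist v y = t := by
        have := huv.symm.reachable.dist_triangle_left y
        rw [dist_eq_one_iff_adj.2 huv.symm] at this
        rcases hyw.diff_dist_adj (u := v) with h' | h' | h' <;> omega
      have := eq_of_adj_of_dist_eq_of_lt_egirth hvw hwx.symm hyw hvx hvy (hg' _ (by omega))
      subst this
      omega
    rcases hwx.diff_dist_adj (u := v) with h' | h' | h' <;> omega
  · exact Or.inl (by omega)

variable [DecidableRel G.Adj]

lemma layer_one [DecidableEq V] (huv : G.Adj u v) (hg : 3 < G.egirth) :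
    G.layer u v 1 = (G.neighborFinset u).erase v := by
  ext w
  simp only [mem_layer, dist_eq_one_iff_adj, Finset.mem_erase, mem_neighborFinset]
  constructor
  · rintro ⟨huw, hvw⟩
    refine ⟨fun hwv => ?_, huw⟩
    simp [hwv] at hvw
  · rintro ⟨hwv, huw⟩
    refine ⟨huw, ?_⟩
    have h0 : G.dist v w ≠ 0 := by
      simpa using ⟨Ne.symm hwv, huv.symm.reachable.trans huw.reachable⟩
    have h1 : G.dist w u ≠ G.dist w v := dist_ne_of_adj_of_lt_egirth huv huw.symm.reachable
      (by rw [dist_eq_one_iff_adj.2 huw.symm]; exact hg)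
    rw [dist_eq_one_iff_adj.2 huw.symm, dist_comm] at h1
    rcases huw.diff_dist_adj (u := v) with h | h | h <;>
      simp only [dist_eq_one_iff_adj.2 huv.symm] at h <;> omega

lemma degree_le_card_adj_layer_succ_add_one {w : V} {t : ℕ} (huv : G.Adj u v)
    (hw : w ∈ G.layer u v t) (ht : 1 ≤ t) (hg : ((2 * t + 4 : ℕ) : ℕ∞) ≤ G.egirth) :
    G.degree w ≤ #{x ∈ G.layer u v (t + 1) | G.Adj w x} + 1 := by
  classical
  have hparent : #{x ∈ G.neighborFinset w | G.dist u x + 1 = t} ≤ 1 := by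
    refine Finset.card_le_one.2 fun y₁ hy₁ y₂ hy₂ => ?_
    simp only [Finset.mem_filter, mem_neighborFinset] at hy₁ hy₂
    exact eq_of_adj_of_dist_eq_of_lt_egirth (m := t - 1) (by rw [(mem_layer.1 hw).1]; omega)
      hy₁.1.symm hy₂.1.symm (by omega) (by omega)
      ((Nat.cast_lt.2 (by omega)).trans_le hg)
  calc G.degree w = #(G.neighborFinset w) := (card_neighborFinset_eq_degree G w).symm
    _ ≤ #({x ∈ G.layer u v (t + 1) | G.Adj w x} ∪
          {x ∈ G.neighborFinset w | G.dist u x + 1 = t}) := by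
      refine Finset.card_le_card fun x hx => ?_
      rw [mem_neighborFinset] at hx
      rcases dist_add_one_eq_or_mem_layer_succ huv hw ht hg hx with h | h <;> simp [h, hx]
    _ ≤ _ := (Finset.card_union_le _ _).trans (by omega)

lemma sum_degree_sub_one_le_card_layer_succ {t : ℕ} (huv : G.Adj u v) (ht : 1 ≤ t)
    (hg : ((2 * t + 4 : ℕ) : ℕ∞) ≤ G.egirth) :
    ∑ w ∈ G.layer u v t, (G.degree w - 1) ≤ #(G.layer u v (t + 1)) := by
  calc ∑ w ∈ G.layer u v t, (G.degree w - 1)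
      ≤ ∑ w ∈ G.layer u v t, #((G.layer u v (t + 1)).bipartiteAbove G.Adj w) :=
        Finset.sum_le_sum fun w hw => by
          have := degree_le_card_adj_layer_succ_add_one huv hw ht hg
          rw [Finset.bipartiteAbove]
          omega
    _ = ∑ x ∈ G.layer u v (t + 1), #((G.layer u v t).bipartiteBelow G.Adj x) :=
        Finset.sum_card_bipartiteAbove_eq_sum_card_bipartiteBelow _
    _ ≤ ∑ x ∈ G.layer u v (t + 1), 1 := Finset.sum_le_sum fun x hx => by
        refine Finset.card_le_one.2 fun y₁ hy₁ y₂ hy₂ => ?_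
        simp only [Finset.mem_bipartiteBelow, mem_layer] at hx hy₁ hy₂
        exact eq_of_adj_of_dist_eq_of_lt_egirth hx.1 hy₁.2 hy₂.2 hy₁.1.1 hy₂.1.1
          ((Nat.cast_lt.2 (by omega)).trans_le hg)
    _ = #(G.layer u v (t + 1)) := by simp

lemma card_layer_mul_le_card_layer_succ {r t : ℕ} (hr : ∀ w, r ≤ G.degree w) (huv : G.Adj u v)
    (ht : 1 ≤ t) (hg : ((2 * t + 4 : ℕ) : ℕ∞) ≤ G.egirth) :
    #(G.layer u v t) * (r - 1) ≤ #(G.layer u v (t + 1)) :=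
  calc #(G.layer u v t) * (r - 1) = ∑ w ∈ G.layer u v t, (r - 1) := by simp
    _ ≤ ∑ w ∈ G.layer u v t, (G.degree w - 1) :=
      Finset.sum_le_sum fun w _ => Nat.sub_le_sub_right (hr w) 1
    _ ≤ _ := sum_degree_sub_one_le_card_layer_succ huv ht hg

lemma sum_degree_sub_one_mul_pow_le_card_layer {r j : ℕ} (hr : ∀ w, r ≤ G.degree w)
    (huv : G.Adj u v) (hg : ((2 * j + 6 : ℕ) : ℕ∞) ≤ G.egirth) :
    (∑ w ∈ G.layer u v 1, (G.degree w - 1)) * (r - 1) ^ j ≤ #(G.layer u v (j + 2)) := by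
  induction j with
  | zero => simpa using sum_degree_sub_one_le_card_layer_succ huv le_rfl hg
  | succ j ih =>
    have hg' : ((2 * j + 6 : ℕ) : ℕ∞) ≤ G.egirth := (Nat.cast_le.2 (by omega)).trans hg
    calc _ = (∑ w ∈ G.layer u v 1, (G.degree w - 1)) * (r - 1) ^ j * (r - 1) := by ring
      _ ≤ #(G.layer u v (j + 2)) * (r - 1) := Nat.mul_le_mul_right _ (ih hg')
      _ ≤ _ := card_layer_mul_le_card_layer_succ hr huv (by omega)
        (by rwa [show 2 * (j + 2) + 4 = 2 * (j + 1) + 6 by ring])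

lemma degree_add_mul_sum_pow_le_sum_card_layer [DecidableEq V] {r k : ℕ}
    (hr : ∀ w, r ≤ G.degree w) (huv : G.Adj u v) (hg : ((2 * k + 4 : ℕ) : ℕ∞) ≤ G.egirth) :
    G.degree u + (∑ w ∈ (G.neighborFinset u).erase v, (G.degree w - 1)) *
        ∑ j ∈ range k, (r - 1) ^ j ≤ ∑ t ∈ range (k + 2), #(G.layer u v t) := by
  have h4 : ((4 : ℕ) : ℕ∞) ≤ G.egirth := (Nat.cast_le.2 (by omega)).trans hg
  have hone : G.layer u v 1 = (G.neighborFinset u).erase v :=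
    layer_one huv (lt_of_lt_of_le (by norm_num) h4)
  have hdeg : #(G.layer u v 1) + 1 = G.degree u := by
    rw [hone, card_erase_add_one ((mem_neighborFinset _ _ _).2 huv), card_neighborFinset_eq_degree]
  have hlayers : ∑ j ∈ range k, (∑ w ∈ G.layer u v 1, (G.degree w - 1)) * (r - 1) ^ j ≤
      ∑ j ∈ range k, #(G.layer u v (j + 1 + 1)) :=
    sum_le_sum fun j hj => sum_degree_sub_one_mul_pow_le_card_layer hr huv
      ((Nat.cast_le.2 (by rw [Finset.mem_range] at hj; omega)).trans hg)
  rw [sum_range_succ', sum_range_succ', zero_add, layer_zero huv, Finset.card_singleton, ← hone,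
    mul_sum]
  omega

end Layer

section Degrees

variable [DecidableRel G.Adj]

lemma deg_eq_degree [Fintype V] (v : V) : deg G v = G.degree v := by
  rw [deg, Set.ncard_eq_toFinset_card', ← card_neighborFinset_eq_degree, neighborFinset]

lemma sum_degree_sub_one_eq [Fintype V] {r s : ℕ} (hdeg : ∀ v, G.degree v = r ∨ G.degree v = s)
    (A : Finset V) : ∑ w ∈ A, (G.degree w - 1) =
      #{w ∈ A | G.degree w = s} * (s - 1) + #{w ∈ A | ¬G.degree w = s} * (r - 1) := by
  have hs : ∑ w ∈ A with G.degree w = s, (G.degree w - 1) =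
      ∑ w ∈ A with G.degree w = s, (s - 1) :=
    sum_congr rfl fun w hw => by rw [(mem_filter.1 hw).2]
  have hr : ∑ w ∈ A with ¬G.degree w = s, (G.degree w - 1) =
      ∑ w ∈ A with ¬G.degree w = s, (r - 1) :=
    sum_congr rfl fun w hw => by rw [(hdeg w).resolve_right (mem_filter.1 hw).2]
  rw [← sum_filter_add_sum_filter_not A (fun w => G.degree w = s), hs, hr]
  simp [mul_comm]

lemma sum_erase_degree_sub_one_add [Fintype V] [DecidableEq V] {r s : ℕ}
    (hdeg : ∀ v, G.degree v = r ∨ G.degree v = s) {x y : V} (hxy : G.Adj x y)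
    (hy : G.degree y = s) :
    ∑ w ∈ (G.neighborFinset x).erase y, (G.degree w - 1) + (s - 1) =
      #{w ∈ G.neighborFinset x | G.degree w = s} * (s - 1) +
        #{w ∈ G.neighborFinset x | ¬G.degree w = s} * (r - 1) := by
  rw [← sum_degree_sub_one_eq hdeg, ← sum_erase_add _ _ ((mem_neighborFinset _ _ _).2 hxy), hy]

/-- Summing `a x + a y` over the edges inside `S` gives `2 ∑ a²`, which by Cauchy–Schwarz is at
least `2 (∑ a)² / #S`. -/
lemma exists_adj_two_mul_le_card_adj_add (S : Finset V) (hS : S.Nonempty) {c : ℕ} (hc : 0 < c)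
    (hsum : c * #S ≤ ∑ x ∈ S, #{y ∈ S | G.Adj x y}) :
    ∃ x ∈ S, ∃ y ∈ S, G.Adj x y ∧ 2 * c ≤ #{z ∈ S | G.Adj x z} + #{z ∈ S | G.Adj y z} := by
  set a : V → ℕ := fun x => #{y ∈ S | G.Adj x y} with ha
  by_contra! h
  have hedges : ∑ x ∈ S, ∑ y ∈ S with G.Adj x y, (a x + a y) = 2 * ∑ x ∈ S, a x ^ 2 := by
    simp_rw [sum_add_distrib]
    rw [sum_comm' (f := fun _ y => a y) (t' := S) (s' := fun y => {x ∈ S | G.Adj y x})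
      fun x y => by simp only [mem_filter, G.adj_comm x y]; tauto]
    simp only [sum_const, smul_eq_mul, sq, two_mul]
    rfl
  have hbound : 2 * ∑ x ∈ S, a x ^ 2 + ∑ x ∈ S, a x ≤ 2 * c * ∑ x ∈ S, a x :=
    calc 2 * ∑ x ∈ S, a x ^ 2 + ∑ x ∈ S, a x
        = ∑ x ∈ S, ∑ y ∈ S with G.Adj x y, (a x + a y + 1) := by
          rw [← hedges, ← sum_add_distrib]
          refine sum_congr rfl fun x _ => ?_
          rw [sum_add_distrib (g := fun _ => 1), sum_const, smul_eq_mul, mul_one]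
      _ ≤ ∑ x ∈ S, ∑ y ∈ S with G.Adj x y, 2 * c :=
          sum_le_sum fun x hx => sum_le_sum fun y hy =>
            h x hx y (mem_filter.1 hy).1 (mem_filter.1 hy).2
      _ = 2 * c * ∑ x ∈ S, a x := by simp [mul_sum, mul_comm, a]
  have hcs := sq_sum_le_card_mul_sum_sq (s := S) (f := a)
  have hpos : 0 < #S := hS.card_pos
  have hT : 0 < ∑ x ∈ S, a x := lt_of_lt_of_le (Nat.mul_pos hc hpos) hsum
  nlinarith [Nat.mul_le_mul_left #S hbound, Nat.mul_le_mul_right (∑ x ∈ S, a x) hsum,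
    Nat.mul_pos hpos hT]

lemma exists_adj_degree_eq_two_mul_sub_le_card_add [Fintype V] {r s : ℕ} (hrs : r < s)
    (hdeg : ∀ v, G.degree v = r ∨ G.degree v = s)
    (hbal : #{v | G.degree v = r} = #{v | G.degree v = s}) (hs : ∃ v, G.degree v = s) :
    ∃ x y, G.Adj x y ∧ G.degree x = s ∧ G.degree y = s ∧
      2 * (s - r) ≤ #{w ∈ G.neighborFinset x | G.degree w = s} +
        #{w ∈ G.neighborFinset y | G.degree w = s} := by
  set Vs : Finset V := {v | G.degree v = s}
  set Vr : Finset V := {v | G.degree v = r}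
  have hnbr : ∀ (d : ℕ) x, #{y ∈ {v | G.degree v = d} | G.Adj x y} =
      #{w ∈ G.neighborFinset x | G.degree w = d} := fun d x => by
    congr 1; ext y; simp [and_comm]
  have hsplit : ∀ x, #{y ∈ Vs | G.Adj x y} + #{y ∈ Vr | G.Adj x y} = G.degree x := fun x => by
    have hr : {w ∈ G.neighborFinset x | G.degree w = r} =
        {w ∈ G.neighborFinset x | ¬G.degree w = s} :=
      filter_congr fun w _ => by have := hdeg w; omega
    rw [hnbr, hnbr, hr, card_filter_add_card_filter_not, card_neighborFinset_eq_degree]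
  have hcross : ∑ x ∈ Vs, #{y ∈ Vr | G.Adj x y} ≤ r * #Vs :=
    calc ∑ x ∈ Vs, #{y ∈ Vr | G.Adj x y} = ∑ y ∈ Vr, #{x ∈ Vs | G.Adj x y} :=
          sum_card_bipartiteAbove_eq_sum_card_bipartiteBelow _
      _ ≤ ∑ y ∈ Vr, G.degree y := sum_le_sum fun y _ => by
          simp only [← hsplit y, G.adj_comm _ y, Nat.le_add_right]
      _ = r * #Vs := by
          rw [sum_congr rfl fun y hy => (mem_filter.1 hy).2, sum_const, smul_eq_mul, hbal, mul_comm]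
  have hsum : (s - r) * #Vs ≤ ∑ x ∈ Vs, #{y ∈ Vs | G.Adj x y} := by
    have : ∑ x ∈ Vs, G.degree x = s * #Vs := by
      rw [sum_congr rfl fun y hy => (mem_filter.1 hy).2, sum_const, smul_eq_mul, mul_comm]
    simp only [← hsplit, sum_add_distrib] at this
    rw [Nat.sub_mul]
    omega
  obtain ⟨x, hx, y, hy, hxy, hle⟩ := exists_adj_two_mul_le_card_adj_add Vs
    (by obtain ⟨v, hv⟩ := hs; exact ⟨v, by simpa [Vs] using hv⟩) (by omega) hsum
  exact ⟨x, y, hxy, (mem_filter.1 hx).2, (mem_filter.1 hy).2, by rwa [hnbr, hnbr] at hle⟩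

end Degrees

end SimpleGraph

/-- `a, c` count the neighbours of degree `s` and `r` of one end of the edge, `b, d` those of the
other end. -/
lemma two_mul_coeff_add_le {r s a b c d : ℕ} (hr : 2 ≤ r) (hrs : r < s) (hac : a + c = s)
    (hbd : b + d = s) (hab : 2 * (s - r) ≤ a + b) :
    2 * (r * s + (s - r) ^ 2 - 2 * s + 1) + 2 * (s - 1) ≤
      a * (s - 1) + c * (r - 1) + (b * (s - 1) + d * (r - 1)) := by
  have h2s : 2 * s ≤ r * s + (s - r) ^ 2 :=
    (Nat.mul_le_mul_right s hr).trans (Nat.le_add_right _ _)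
  zify [h2s, hrs.le, (by omega : 1 ≤ s), (by omega : 1 ≤ r)] at hab ⊢
  have hac' : (a : ℤ) + c = s := by exact_mod_cast hac
  have hbd' : (b : ℤ) + d = s := by exact_mod_cast hbd
  have hsr : (0 : ℤ) ≤ s - r := sub_nonneg.2 (by exact_mod_cast hrs.le)
  nlinarith [mul_le_mul_of_nonneg_right hab hsr]

/-- Moore-type lower bound for even girth `g > 4`. -/
theorem stmt_7 (r s g n : ℕ) (hr : 2 ≤ r) (hrs : r < s) (heven : Even g) (hg : 4 < g)
    (G : SimpleGraph (Fin n)) (h : IsBabi r s g G) :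
    2 * (s + (r * s + (s - r) ^ 2 - 2 * s + 1) *
      (∑ t ∈ Finset.range ((g - 6) / 2 + 1), (r - 1) ^ t)) ≤ n := by
  classical
  obtain ⟨hgirth, hdeg, -, hs, hbal⟩ := h
  simp only [deg_eq_degree, Set.ncard_eq_toFinset_card', Set.toFinset_ofPred] at hdeg hs hbal
  obtain ⟨u, v, huv, hu, hv, hab⟩ :=
    exists_adj_degree_eq_two_mul_sub_le_card_add hrs hdeg hbal hs
  set k := (g - 6) / 2 + 1
  have hegirth : ((2 * k + 4 : ℕ) : ℕ∞) ≤ G.egirth := by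
    obtain ⟨m, rfl⟩ := heven
    rw [egirth_eq_of_girth_eq hgirth (by omega)]
    exact Nat.cast_le.2 (by omega)
  have hmin : ∀ w, r ≤ G.degree w := fun w => by rcases hdeg w with h | h <;> omega
  have hU := degree_add_mul_sum_pow_le_sum_card_layer hmin huv hegirth
  have hV := degree_add_mul_sum_pow_le_sum_card_layer hmin huv.symm hegirth
  rw [hu] at hU
  rw [hv] at hV
  have hLu := sum_erase_degree_sub_one_add hdeg huv hv
  have hLv := sum_erase_degree_sub_one_add hdeg huv.symm hu
  have hcoeff := two_mul_coeff_add_le hr hrs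
    ((card_filter_add_card_filter_not _).trans ((card_neighborFinset_eq_degree _ _).trans hu))
    ((card_filter_add_card_filter_not _).trans ((card_neighborFinset_eq_degree _ _).trans hv)) hab
  have htot := sum_card_layer_add_card_layer_le_card (G := G) u v (k + 2)
  rw [sum_add_distrib, Fintype.card_fin] at htot
  set Lu := ∑ w ∈ (G.neighborFinset u).erase v, (G.degree w - 1)
  set Lv := ∑ w ∈ (G.neighborFinset v).erase u, (G.degree w - 1)
  set S := ∑ j ∈ Finset.range k, (r - 1) ^ j
  have hL : 2 * (r * s + (s - r) ^ 2 - 2 * s + 1) ≤ Lu + Lv := by omega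
  nlinarith [Nat.mul_le_mul_right S hL]
end

section
/- Let 2 ≤ r < s be integers. If there exists an (r,s;5)-balanced biregular graph of order exactly rs + (s−r)² + 1, then r = 2 and s = 3. -/
open SimpleGraph Set

/-!
Write `s = r + t`. Girth 5 makes the ball of radius 2 around any vertex `u` a tree, so
`1 + ∑_{w ~ u} deg w ≤ n = r s + t² + 1`. For `deg u = s` with `k` neighbours of degree `s` the
sum is `r s + t k`, whence `k ≤ t`. Counting the edges between the two (equal) degree classes
then forces equality everywhere: degree-`r` vertices only see degree-`s` vertices, and every
degree-`s` vertex has exactly `t` neighbours of degree `s`. For such a vertex the tree exhausts the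
graph and contains at most `r + t r` vertices of degree `r`, so `n / 2 ≤ r + t r`; together with
`n = r² + r t + t² + 1` this leaves only `r = 2`, `t = 1`.
-/

open Finset

namespace SimpleGraph

variable {V : Type*} {G : SimpleGraph V}

lemma not_adj_of_adj_of_adj (hG : 3 < G.egirth) {a b c : V} (hab : G.Adj a b)
    (hbc : G.Adj b c) : ¬G.Adj c a := by
  intro hca
  have hcycle : (Walk.cons hab (Walk.cons hbc (Walk.cons hca Walk.nil))).IsCycle := by
    have := hab.ne; have := hbc.ne; have := hca.ne
    simp [Walk.cons_isCycle_iff, Sym2.eq, Sym2.rel_iff', *, Ne.symm]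
  have := hG.trans_le (egirth_le_length hcycle)
  simp at this

lemma commonNeighbors_subsingleton (hG : 4 < G.egirth) {a b : V} (hab : a ≠ b) :
    (G.commonNeighbors a b).Subsingleton := by
  intro x hx y hy
  rw [mem_commonNeighbors] at hx hy
  obtain ⟨hax, hbx⟩ := hx
  obtain ⟨hay, hby⟩ := hy
  by_contra hxy
  have hcycle : (Walk.cons hax (Walk.cons hbx.symm (Walk.cons hby
      (Walk.cons hay.symm Walk.nil)))).IsCycle := by
    have := hax.ne; have := hbx.ne; have := hay.ne; have := hby.ne
    simp [Walk.cons_isCycle_iff, Sym2.eq, Sym2.rel_iff', *, Ne.symm]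
  have := hG.trans_le (egirth_le_length hcycle)
  simp at this

variable [Fintype V] [DecidableRel G.Adj]

section TwoDegrees

variable {r t : ℕ}

lemma card_filter_degree_add_card_filter_degree
    (hdeg : ∀ v, G.degree v = r ∨ G.degree v = r + t) (ht : 0 < t) (s : Finset V) :
    #{w ∈ s | G.degree w = r} + #{w ∈ s | G.degree w = r + t} = #s := by
  have hr : {w ∈ s | G.degree w = r} = {w ∈ s | ¬G.degree w = r + t} :=
    filter_congr fun w _ => by have := hdeg w; omega
  rw [hr, add_comm, card_filter_add_card_filter_not]

lemma sum_degree_neighborFinset (hdeg : ∀ v, G.degree v = r ∨ G.degree v = r + t) (u : V) :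
    ∑ w ∈ G.neighborFinset u, G.degree w =
      r * G.degree u + t * #{w ∈ G.neighborFinset u | G.degree w = r + t} := by
  have hsplit : ∀ w, G.degree w = r + t * if G.degree w = r + t then 1 else 0 := by
    intro w
    have := hdeg w
    split_ifs <;> omega
  rw [sum_congr rfl fun w _ => hsplit w, sum_add_distrib, ← mul_sum, card_filter, sum_const,
    card_neighborFinset_eq_degree, smul_eq_mul, mul_comm]

end TwoDegrees

lemma sum_card_filter_neighborFinset_comm (p q : V → Prop) [DecidablePred p] [DecidablePred q] :
    ∑ u ∈ univ.filter p, #{w ∈ G.neighborFinset u | q w} =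
      ∑ v ∈ univ.filter q, #{w ∈ G.neighborFinset v | p w} := by
  convert sum_card_bipartiteAbove_eq_sum_card_bipartiteBelow (r := G.Adj) using 3 with u _ v _
  · ext w
    simp [bipartiteAbove, and_comm]
  · ext w
    simp [bipartiteBelow, adj_comm, and_comm]

variable [DecidableEq V]

lemma card_ball_two (hG : 4 < G.egirth) (u : V) :
    #(insert u (G.neighborFinset u ∪
      (G.neighborFinset u).biUnion fun w => G.neighborFinset w \ {u})) =
      1 + ∑ w ∈ G.neighborFinset u, G.degree w := by
  have hsphere : (G.neighborFinset u : Set V).PairwiseDisjoint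
      fun w => G.neighborFinset w \ {u} := by
    intro w hw w' hw' hne
    refine Finset.disjoint_left.mpr fun x hx hx' => hne ?_
    simp only [Finset.mem_sdiff, mem_neighborFinset, Finset.mem_singleton, coe_neighborFinset,
      mem_neighborSet] at hx hx' hw hw'
    exact commonNeighbors_subsingleton hG (Ne.symm hx.2) ⟨hw, hx.1.symm⟩ ⟨hw', hx'.1.symm⟩
  have hdisj : Disjoint (G.neighborFinset u)
      ((G.neighborFinset u).biUnion fun w => G.neighborFinset w \ {u}) := by
    simp only [Finset.disjoint_left, Finset.mem_biUnion, Finset.mem_sdiff, mem_neighborFinset,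
      Finset.mem_singleton, not_exists, not_and]
    exact fun x hux w huw hwx _ =>
      not_adj_of_adj_of_adj (lt_trans (by norm_num) hG) huw hwx hux.symm
  have hdegree : ∀ w ∈ G.neighborFinset u, G.degree w = #(G.neighborFinset w \ {u}) + 1 := by
    intro w hw
    rw [← card_neighborFinset_eq_degree, ← card_sdiff_add_card_eq_card (s := {u}),
      Finset.card_singleton]
    simpa [adj_comm] using hw
  rw [card_insert_of_notMem (by simp), card_union_of_disjoint hdisj, card_biUnion hsphere,
    sum_congr rfl hdegree, sum_add_distrib, card_eq_sum_ones (G.neighborFinset u)]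
  ring

lemma one_add_sum_degree_le_card (hG : 4 < G.egirth) (u : V) :
    1 + ∑ w ∈ G.neighborFinset u, G.degree w ≤ Fintype.card V :=
  card_ball_two hG u ▸ card_le_univ _

lemma exists_adj_adj_of_card_eq (hG : 4 < G.egirth) {u : V}
    (hu : Fintype.card V = 1 + ∑ w ∈ G.neighborFinset u, G.degree w) (v : V) :
    v = u ∨ G.Adj u v ∨ ∃ w, G.Adj u w ∧ G.Adj w v := by
  have hball := eq_univ_of_card _ ((card_ball_two hG u).trans hu.symm)
  have hv := eq_univ_iff_forall.mp hball v
  simp only [Finset.mem_insert, Finset.mem_union, mem_neighborFinset, Finset.mem_biUnion,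
    Finset.mem_sdiff, Finset.mem_singleton] at hv
  tauto

section Balanced

variable {r t : ℕ}

lemma card_filter_neighbor_degree_le (hG : 4 < G.egirth)
    (hdeg : ∀ v, G.degree v = r ∨ G.degree v = r + t) (ht : 0 < t)
    (hcard : Fintype.card V = r * (r + t) + t ^ 2 + 1) {u : V} (hu : G.degree u = r + t) :
    #{w ∈ G.neighborFinset u | G.degree w = r + t} ≤ t := by
  have hmoore := one_add_sum_degree_le_card hG u
  rw [sum_degree_neighborFinset hdeg, hu, hcard] at hmoore
  exact Nat.le_of_mul_le_mul_left (by nlinarith) ht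

lemma adj_degree_eq_and_card_filter_eq (hG : 4 < G.egirth)
    (hdeg : ∀ v, G.degree v = r ∨ G.degree v = r + t) (ht : 0 < t)
    (hcard : Fintype.card V = r * (r + t) + t ^ 2 + 1)
    (hbal : #{v | G.degree v = r} = #{v | G.degree v = r + t}) :
    (∀ ⦃v w⦄, G.degree v = r → G.Adj v w → G.degree w = r + t) ∧
      ∀ ⦃u⦄, G.degree u = r + t → #{w ∈ G.neighborFinset u | G.degree w = r} = r := by
  have hR : ∀ v ∈ ({v | G.degree v = r} : Finset V),
      #{w ∈ G.neighborFinset v | G.degree w = r + t} ≤ r := fun v hv =>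
    (card_filter_le _ _).trans_eq <| (card_neighborFinset_eq_degree G v).trans (by simpa using hv)
  have hS : ∀ u ∈ ({u | G.degree u = r + t} : Finset V),
      r ≤ #{w ∈ G.neighborFinset u | G.degree w = r} := by
    intro u hu
    rw [mem_filter] at hu
    have hsplit := card_filter_degree_add_card_filter_degree hdeg ht (G.neighborFinset u)
    have hle := card_filter_neighbor_degree_le hG hdeg ht hcard hu.2
    rw [card_neighborFinset_eq_degree, hu.2] at hsplit
    omega
  -- both sides of `hcross` count the edges between the degree classes, and `hR`, `hS` squeeze
  -- them to `r * #{v | G.degree v = r}`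
  have hcross := sum_card_filter_neighborFinset_comm (G := G) (fun u => G.degree u = r + t)
    (fun v => G.degree v = r)
  have hsumR := sum_le_sum hR
  have hsumS := sum_le_sum hS
  simp only [sum_const, smul_eq_mul] at hsumR hsumS
  rw [hbal] at hsumR
  refine ⟨fun v w hv hvw => ?_, fun u hu => ?_⟩
  · have hv' := (sum_eq_sum_iff_of_le hR).mp (by simp only [sum_const, smul_eq_mul, hbal]; omega)
      v (by simpa using hv)
    exact filter_card_eq (hv'.trans (by rw [card_neighborFinset_eq_degree, hv])) w
      (by simpa using hvw)
  · exact ((sum_eq_sum_iff_of_le hS).mp (by simp only [sum_const, smul_eq_mul]; omega)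
      u (by simpa using hu)).symm

lemma card_filter_degree_le (hG : 4 < G.egirth)
    (hdeg : ∀ v, G.degree v = r ∨ G.degree v = r + t) (ht : 0 < t)
    (hcard : Fintype.card V = r * (r + t) + t ^ 2 + 1)
    (hbal : #{v | G.degree v = r} = #{v | G.degree v = r + t}) (hS : ∃ u, G.degree u = r + t) :
    #{v | G.degree v = r} ≤ r + t * r := by
  obtain ⟨u, hu⟩ := hS
  obtain ⟨hRS, hSR⟩ := adj_degree_eq_and_card_filter_eq hG hdeg ht hcard hbal
  have huR := hSR hu
  have huS : #{w ∈ G.neighborFinset u | G.degree w = r + t} = t := by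
    have := card_filter_degree_add_card_filter_degree hdeg ht (G.neighborFinset u)
    rw [card_neighborFinset_eq_degree, hu, huR] at this
    omega
  have hfull : Fintype.card V = 1 + ∑ w ∈ G.neighborFinset u, G.degree w := by
    rw [sum_degree_neighborFinset hdeg, hu, huS, hcard]
    ring
  have hcover : ({v | G.degree v = r} : Finset V) ⊆
      {w ∈ G.neighborFinset u | G.degree w = r} ∪
        {w ∈ G.neighborFinset u | G.degree w = r + t}.biUnion fun w =>
          {x ∈ G.neighborFinset w | G.degree x = r} := by
    intro v hv
    simp only [Finset.mem_filter, Finset.mem_univ, true_and] at hv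
    simp only [Finset.mem_union, Finset.mem_filter, mem_neighborFinset, Finset.mem_biUnion]
    rcases exists_adj_adj_of_card_eq hG hfull v with rfl | huv | ⟨w, huw, hwv⟩
    · omega
    · exact Or.inl ⟨huv, hv⟩
    · have hw : G.degree w = r + t := (hdeg w).resolve_left fun hw => by
        have := hRS hw hwv
        omega
      exact Or.inr ⟨w, ⟨huw, hw⟩, hwv, hv⟩
  calc #{v | G.degree v = r}
      ≤ #{w ∈ G.neighborFinset u | G.degree w = r} + #({w ∈ G.neighborFinset u |
          G.degree w = r + t}.biUnion fun w => {x ∈ G.neighborFinset w | G.degree x = r}) :=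
        (Finset.card_le_card hcover).trans (Finset.card_union_le _ _)
    _ ≤ r + ∑ w ∈ G.neighborFinset u with G.degree w = r + t,
          #{x ∈ G.neighborFinset w | G.degree x = r} := by
        rw [huR]
        exact Nat.add_le_add_left card_biUnion_le r
    _ = r + t * r := by
        rw [sum_congr rfl fun w hw => hSR (mem_filter.mp hw).2, sum_const, huS, smul_eq_mul]

end Balanced

end SimpleGraph

lemma deg_eq_degree {V : Type*} (G : SimpleGraph V) [Fintype V] [DecidableRel G.Adj] (v : V) :
    deg G v = G.degree v := by
  rw [deg, Set.ncard_eq_toFinset_card']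
  rfl

lemma eq_two_and_eq_one_of_mul_add_sq_le {r t : ℕ} (hr : 2 ≤ r) (ht : 0 < t)
    (h : r * (r + t) + t ^ 2 + 1 ≤ 2 * (r + t * r)) : r = 2 ∧ t = 1 := by
  have ht1 : t = 1 := by nlinarith [sq_nonneg ((2 * r : ℤ) - t - 2)]
  subst ht1
  exact ⟨by nlinarith, rfl⟩

/-- equality in the girth-5 bound forces `r = 2`, `s = 3`. -/
theorem stmt_8 (r s : ℕ) (hr : 2 ≤ r) (hrs : r < s)
    (h : ∃ G : SimpleGraph (Fin (r * s + (s - r) ^ 2 + 1)), IsBabi r s 5 G) :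
    r = 2 ∧ s = 3 := by
  classical
  obtain ⟨G, hgirth, hdeg, -, hS, hbal⟩ := h
  obtain ⟨t, rfl⟩ := Nat.exists_eq_add_of_le hrs.le
  have ht : 0 < t := by omega
  simp only [deg_eq_degree, ← coe_filter_univ, Set.ncard_coe_finset] at hdeg hS hbal
  have hG : 4 < G.egirth := by
    rw [girth, ENat.toNat_eq_iff (by norm_num)] at hgirth
    rw [hgirth]
    norm_num
  have hcard : Fintype.card (Fin (r * (r + t) + (r + t - r) ^ 2 + 1)) =
      r * (r + t) + t ^ 2 + 1 := by
    simp
  have hR := card_filter_degree_le hG hdeg ht hcard hbal hS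
  have hpart := card_filter_degree_add_card_filter_degree hdeg ht univ
  rw [← hbal, card_univ, hcard] at hpart
  obtain ⟨rfl, rfl⟩ := eq_two_and_eq_one_of_mul_add_sq_le hr ht (by omega)
  exact ⟨rfl, rfl⟩
end
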